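/- arXiv:1905.09513 — 2 statements merged into one kernel-verified Lean document; each statement's English description precedes it below -/
import Mathlib

section
/- Let n ≥ 1 be an integer and suppose 0 < β < α ≤ n. Then for every Lebesgue measurable function F : ℝⁿ → [0,∞) one has M_α F ≤ M_β F. -/
open MeasureTheory Metric Real
open scoped ENNReal

noncomputable section

abbrev Esp (n : ℕ) := EuclideanSpace ℝ (Fin n)

/-- Surface measure on the unit sphere in `ℝⁿ`. -/
def sphσ (n : ℕ) : Measure (Esp n) :=
  (μH[(n : ℝ) - 1]).restrict (sphere (0 : Esp n) 1)

/-- The Fourier extension operator of the unit sphere. -/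
def extOp (n : ℕ) (f : Esp n → ℂ) (x : Esp n) : ℂ :=
  ∫ ξ, Complex.exp (((-2 * π * (inner ℝ x ξ : ℝ) : ℝ) : ℂ) * Complex.I) * f ξ ∂(sphσ n)

/-- Admissible constants in the definition of `A_α(H)`. -/
def weightBnds {n : ℕ} (α : ℝ) (H : Esp n → ℝ) : Set ℝ :=
  {C : ℝ | 0 ≤ C ∧ ∀ (x₀ : Esp n) (R : ℝ), 1 ≤ R →
    (∫ x in closedBall x₀ R, H x) ≤ C * R ^ α}

/-- `H : ℝⁿ → [0,1]` is a weight of fractal dimension `α`. -/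
def IsWeight {n : ℕ} (α : ℝ) (H : Esp n → ℝ) : Prop :=
  Measurable H ∧ (∀ x, 0 ≤ H x ∧ H x ≤ 1) ∧ (weightBnds α H).Nonempty

/-- `A_α(H)`. -/
def wA {n : ℕ} (α : ℝ) (H : Esp n → ℝ) : ℝ :=
  sInf (weightBnds α H)

/-- The `L^p` norm with respect to the surface measure of the sphere. -/
def spLp (n : ℕ) (p : ℝ≥0∞) (f : Esp n → ℂ) : ℝ :=
  (eLpNorm f p (sphσ n)).toReal

/-- `M_α F`: the weighted maximal quantity from the paper, valued in `ℝ≥0∞`. -/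
def fracM (n : ℕ) (α : ℝ) (F : Esp n → ℝ) : ℝ≥0∞ :=
  (⨆ (H : Esp n → ℝ) (_ : IsWeight α H ∧ H ≠ 0),
      (∫⁻ x, ENNReal.ofReal (F x ^ α * H x)) / ENNReal.ofReal (wA α H)) ^ (1 / α)

/-!
Let `S = M_β(F)^β`, so that `∫ F^β G ≤ S · A_β(G)` for every `β`-weight `G`. Fix an `α`-weight `H`
and a bounded `0 ≤ f ≤ F` with `I = ∫ f^α H < ∞`. Since
`f^(α-β) H = (f^α H)^(1-β/α) · H^(β/α)`, Hölder's inequality bounds the integral of `f^(α-β) H`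
over a ball of radius `R ≥ 1` by `I^(1-β/α) (A_α(H) R^α)^(β/α)`, so (after scaling it below `1`)
`f^(α-β) H` is a `β`-weight with `A_β ≤ I^(1-β/α) A_α(H)^(β/α)`. Testing it against `F^β`, where
`F^β f^(α-β) H ≥ f^α H`, gives `I ≤ S I^(1-β/α) A_α(H)^(β/α)`, i.e. `I ≤ S^(α/β) A_α(H)`.
Truncating `F` to `min F k` on the ball of radius `k` and letting `k → ∞` (Fatou) yields
`∫ F^α H ≤ S^(α/β) A_α(H)`, which is `M_α F ≤ M_β F`.
-/

section Weights

variable {n : ℕ} {α : ℝ} {H : Esp n → ℝ}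

lemma wA_mem_weightBnds (h : (weightBnds α H).Nonempty) : wA α H ∈ weightBnds α H := by
  refine ⟨le_csInf h fun C hC => hC.1, fun x₀ R hR => ?_⟩
  have hRα : 0 < R ^ α := rpow_pos_of_pos (one_pos.trans_le hR) α
  rw [← div_le_iff₀ hRα]
  exact le_csInf h fun C hC => (div_le_iff₀ hRα).2 (hC.2 x₀ R hR)

lemma wA_le_of_mem {C : ℝ} (hC : C ∈ weightBnds α H) : wA α H ≤ C :=
  csInf_le ⟨0, fun _ hc => hc.1⟩ hC

lemma IsWeight.lintegral_closedBall_le (hH : IsWeight α H) (x₀ : Esp n) {R : ℝ} (hR : 1 ≤ R) :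
    ∫⁻ x in closedBall x₀ R, ENNReal.ofReal (H x) ≤
      ENNReal.ofReal (wA α H) * ENNReal.ofReal (R ^ α) := by
  obtain ⟨hm, h01, hne⟩ := hH
  have hint : IntegrableOn H (closedBall x₀ R) :=
    Measure.integrableOn_of_bounded (M := 1) measure_closedBall_lt_top.ne
      hm.aestronglyMeasurable (Filter.Eventually.of_forall fun x => by
        rw [Real.norm_eq_abs, abs_of_nonneg (h01 x).1]; exact (h01 x).2)
  rw [← ofReal_integral_eq_lintegral_ofReal hint (Filter.Eventually.of_forall fun x => (h01 x).1),
    ← ENNReal.ofReal_mul (wA_mem_weightBnds hne).1]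
  exact ENNReal.ofReal_le_ofReal ((wA_mem_weightBnds hne).2 x₀ R hR)

lemma isWeight_of_lintegral_closedBall_le (hm : Measurable H) (h01 : ∀ x, 0 ≤ H x ∧ H x ≤ 1)
    {C : ℝ≥0∞} (hC : C ≠ ∞)
    (hball : ∀ (x₀ : Esp n) (R : ℝ), 1 ≤ R →
      ∫⁻ x in closedBall x₀ R, ENNReal.ofReal (H x) ≤ C * ENNReal.ofReal (R ^ α)) :
    IsWeight α H ∧ ENNReal.ofReal (wA α H) ≤ C := by
  have hmem : C.toReal ∈ weightBnds α H := by
    refine ⟨ENNReal.toReal_nonneg, fun x₀ R hR => ?_⟩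
    have hRα : 0 ≤ R ^ α := rpow_nonneg (zero_le_one.trans hR) α
    rw [integral_eq_lintegral_of_nonneg_ae (Filter.Eventually.of_forall fun x => (h01 x).1)
      hm.aestronglyMeasurable]
    refine ENNReal.toReal_le_of_le_ofReal (mul_nonneg ENNReal.toReal_nonneg hRα) ?_
    rw [ENNReal.ofReal_mul ENNReal.toReal_nonneg, ENNReal.ofReal_toReal hC]
    exact hball x₀ R hR
  refine ⟨⟨hm, h01, C.toReal, hmem⟩, ?_⟩
  rw [← ENNReal.ofReal_toReal hC]
  exact ENNReal.ofReal_le_ofReal (wA_le_of_mem hmem)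

end Weights

lemma ENNReal.le_rpow_inv_mul_of_le_mul_rpow {I S A : ℝ≥0∞} {θ : ℝ} (hI : I ≠ ∞) (hθ : 0 < θ)
    (h : I ≤ S * (I ^ (1 - θ) * A ^ θ)) : I ≤ S ^ θ⁻¹ * A := by
  rcases eq_or_ne I 0 with rfl | hI0
  · exact zero_le
  have hsplit : I = I ^ θ * I ^ (1 - θ) := by
    rw [← ENNReal.rpow_add _ _ hI0 hI, add_sub_cancel, ENNReal.rpow_one]
  have hθI : I ^ θ ≤ S * A ^ θ := by
    refine (ENNReal.mul_le_mul_iff_left (c := I ^ (1 - θ)) ?_ ?_).1 ?_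
    · exact (ENNReal.rpow_pos (pos_iff_ne_zero.2 hI0) hI).ne'
    · exact ENNReal.rpow_ne_top_of_ne_zero hI0 hI
    · calc I ^ θ * I ^ (1 - θ) = I := hsplit.symm
        _ ≤ S * (I ^ (1 - θ) * A ^ θ) := h
        _ = S * A ^ θ * I ^ (1 - θ) := by ring
  calc I = (I ^ θ) ^ θ⁻¹ := by rw [← ENNReal.rpow_mul, mul_inv_cancel₀ hθ.ne', ENNReal.rpow_one]
    _ ≤ (S * A ^ θ) ^ θ⁻¹ := ENNReal.rpow_le_rpow hθI (inv_nonneg.2 hθ.le)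
    _ = S ^ θ⁻¹ * A := by
      rw [ENNReal.mul_rpow_of_nonneg _ _ (inv_nonneg.2 hθ.le), ← ENNReal.rpow_mul,
        mul_inv_cancel₀ hθ.ne', ENNReal.rpow_one]

lemma rpow_sub_mul_eq_rpow_mul_rpow {a h α β : ℝ} (ha : 0 ≤ a) (hh : 0 ≤ h) (hα : α ≠ 0) :
    a ^ (α - β) * h = (a ^ α * h) ^ (1 - β / α) * h ^ (β / α) := by
  rw [mul_rpow (rpow_nonneg ha α) hh, ← rpow_mul ha, mul_one_sub, mul_div_cancel₀ _ hα, mul_assoc,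
    ← rpow_add' hh (by rw [sub_add_cancel]; exact one_ne_zero), sub_add_cancel, rpow_one]

section WeightFromWeight

variable {n : ℕ} {α β : ℝ} {H f : Esp n → ℝ}

lemma lintegral_closedBall_rpow_sub_mul_le (hα : 0 < α) (hβ : 0 ≤ β) (hβα : β ≤ α)
    (hH : IsWeight α H) (hf : Measurable f) (hf0 : ∀ x, 0 ≤ f x) (x₀ : Esp n) {R : ℝ}
    (hR : 1 ≤ R) :
    ∫⁻ x in closedBall x₀ R, ENNReal.ofReal (f x ^ (α - β) * H x) ≤
      (∫⁻ x, ENNReal.ofReal (f x ^ α * H x)) ^ (1 - β / α) *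
        ENNReal.ofReal (wA α H) ^ (β / α) * ENNReal.ofReal (R ^ β) := by
  have hθ0 : 0 ≤ β / α := div_nonneg hβ hα.le
  have hθ1 : 0 ≤ 1 - β / α := sub_nonneg.2 ((div_le_one hα).2 hβα)
  have hR0 : 0 ≤ R := zero_le_one.trans hR
  have hH0 : ∀ x, 0 ≤ H x := fun x => (hH.2.1 x).1
  calc ∫⁻ x in closedBall x₀ R, ENNReal.ofReal (f x ^ (α - β) * H x)
      = ∫⁻ x in closedBall x₀ R,
          ENNReal.ofReal (f x ^ α * H x) ^ (1 - β / α) * ENNReal.ofReal (H x) ^ (β / α) := by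
        refine lintegral_congr fun x => ?_
        have hfαH : 0 ≤ f x ^ α * H x := mul_nonneg (rpow_nonneg (hf0 x) α) (hH0 x)
        rw [ENNReal.ofReal_rpow_of_nonneg hfαH hθ1, ENNReal.ofReal_rpow_of_nonneg (hH0 x) hθ0,
          ← ENNReal.ofReal_mul (rpow_nonneg hfαH _),
          ← rpow_sub_mul_eq_rpow_mul_rpow (hf0 x) (hH0 x) hα.ne']
    _ ≤ (∫⁻ x in closedBall x₀ R, ENNReal.ofReal (f x ^ α * H x)) ^ (1 - β / α) *
          (∫⁻ x in closedBall x₀ R, ENNReal.ofReal (H x)) ^ (β / α) :=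
        ENNReal.lintegral_mul_norm_pow_le
          ((hf.pow_const α).mul hH.1).ennreal_ofReal.aemeasurable
          hH.1.ennreal_ofReal.aemeasurable hθ1 hθ0 (sub_add_cancel 1 _)
    _ ≤ (∫⁻ x, ENNReal.ofReal (f x ^ α * H x)) ^ (1 - β / α) *
          (ENNReal.ofReal (wA α H) * ENNReal.ofReal (R ^ α)) ^ (β / α) := by
        gcongr
        exacts [Measure.restrict_le_self, hH.lintegral_closedBall_le x₀ hR]
    _ = _ := by
        rw [ENNReal.mul_rpow_of_nonneg _ _ hθ0,
          ENNReal.ofReal_rpow_of_nonneg (rpow_nonneg hR0 α) hθ0, ← rpow_mul hR0,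
          mul_div_cancel₀ _ hα.ne', mul_assoc]

lemma isWeight_inv_mul_rpow_sub_mul (hα : 0 < α) (hβ : 0 ≤ β) (hβα : β ≤ α)
    (hH : IsWeight α H) (hf : Measurable f) (hf0 : ∀ x, 0 ≤ f x) {T : ℝ} (hT : 0 < T)
    (hfT : ∀ x, f x ≤ T) (hI : ∫⁻ x, ENNReal.ofReal (f x ^ α * H x) ≠ ∞) :
    let G := fun x => (T ^ (α - β))⁻¹ * (f x ^ (α - β) * H x)
    IsWeight β G ∧ ENNReal.ofReal (wA β G) ≤ ENNReal.ofReal (T ^ (α - β))⁻¹ *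
      ((∫⁻ x, ENNReal.ofReal (f x ^ α * H x)) ^ (1 - β / α) *
        ENNReal.ofReal (wA α H) ^ (β / α)) := by
  intro G
  have hK : 0 < T ^ (α - β) := rpow_pos_of_pos hT _
  have hG01 : ∀ x, 0 ≤ G x ∧ G x ≤ 1 := fun x => by
    have hfx := hf0 x
    have hHx := (hH.2.1 x).1
    refine ⟨by positivity, (inv_mul_le_one₀ hK).2 ?_⟩
    calc f x ^ (α - β) * H x ≤ T ^ (α - β) * 1 :=
          mul_le_mul (rpow_le_rpow hfx (hfT x) (sub_nonneg.2 hβα)) (hH.2.1 x).2 hHx hK.le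
      _ = T ^ (α - β) := mul_one _
  refine isWeight_of_lintegral_closedBall_le (((hf.pow_const _).mul hH.1).const_mul _) hG01
    (ENNReal.mul_ne_top ENNReal.ofReal_ne_top (ENNReal.mul_ne_top
      (ENNReal.rpow_ne_top_of_nonneg (sub_nonneg.2 ((div_le_one hα).2 hβα)) hI)
      (ENNReal.rpow_ne_top_of_nonneg (div_nonneg hβ hα.le) ENNReal.ofReal_ne_top)))
    fun x₀ R hR => ?_
  calc ∫⁻ x in closedBall x₀ R, ENNReal.ofReal (G x)
      = ENNReal.ofReal (T ^ (α - β))⁻¹ *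
          ∫⁻ x in closedBall x₀ R, ENNReal.ofReal (f x ^ (α - β) * H x) := by
        rw [← lintegral_const_mul' _ _ ENNReal.ofReal_ne_top]
        exact lintegral_congr fun x => ENNReal.ofReal_mul (inv_nonneg.2 hK.le)
    _ ≤ _ := by
        rw [mul_assoc]
        gcongr
        exact lintegral_closedBall_rpow_sub_mul_le hα hβ hβα hH hf hf0 x₀ hR

end WeightFromWeight

lemma lintegral_rpow_mul_le_of_bounded {n : ℕ} {α β : ℝ} (hβ : 0 < β) (hβα : β < α)
    {F H f : Esp n → ℝ} {S : ℝ≥0∞}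
    (hS : ∀ G, IsWeight β G →
      ∫⁻ x, ENNReal.ofReal (F x ^ β * G x) ≤ S * ENNReal.ofReal (wA β G))
    (hH : IsWeight α H) (hf : Measurable f) (hf0 : ∀ x, 0 ≤ f x) (hfF : ∀ x, f x ≤ F x)
    {T : ℝ} (hT : 0 < T) (hfT : ∀ x, f x ≤ T)
    (hI : ∫⁻ x, ENNReal.ofReal (f x ^ α * H x) ≠ ∞) :
    ∫⁻ x, ENNReal.ofReal (f x ^ α * H x) ≤ S ^ (α / β) * ENNReal.ofReal (wA α H) := by
  have hα : 0 < α := hβ.trans hβα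
  set I := ∫⁻ x, ENNReal.ofReal (f x ^ α * H x)
  set K := T ^ (α - β)
  have hK : 0 < K := rpow_pos_of_pos hT _
  obtain ⟨hGw, hGA⟩ := isWeight_inv_mul_rpow_sub_mul hα hβ.le hβα.le hH hf hf0 hT hfT hI
  set G : Esp n → ℝ := fun x => K⁻¹ * (f x ^ (α - β) * H x)
  have hlow : I ≤ ENNReal.ofReal K * ∫⁻ x, ENNReal.ofReal (F x ^ β * G x) := by
    rw [← lintegral_const_mul' _ _ ENNReal.ofReal_ne_top]
    refine lintegral_mono fun x => ?_
    rw [← ENNReal.ofReal_mul hK.le]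
    refine ENNReal.ofReal_le_ofReal ?_
    have hfx := hf0 x
    have hHx := (hH.2.1 x).1
    calc f x ^ α * H x = f x ^ β * (f x ^ (α - β) * H x) := by
          rw [← mul_assoc, ← rpow_add' hfx (by simpa using hα.ne'), add_sub_cancel]
      _ ≤ F x ^ β * (f x ^ (α - β) * H x) := by gcongr; exact hfF x
      _ = K * (F x ^ β * G x) := by simp only [G]; field_simp
  have hIθ : I ≤ S * (I ^ (1 - β / α) * ENNReal.ofReal (wA α H) ^ (β / α)) :=
    calc I ≤ ENNReal.ofReal K * (S * ENNReal.ofReal (wA β G)) :=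
          hlow.trans (by gcongr; exact hS G hGw)
      _ ≤ ENNReal.ofReal K * (S * (ENNReal.ofReal K⁻¹ *
            (I ^ (1 - β / α) * ENNReal.ofReal (wA α H) ^ (β / α)))) := by gcongr
      _ = S * (I ^ (1 - β / α) * ENNReal.ofReal (wA α H) ^ (β / α)) := by
        rw [mul_left_comm, ← mul_assoc (ENNReal.ofReal K), ← ENNReal.ofReal_mul hK.le,
          mul_inv_cancel₀ hK.ne', ENNReal.ofReal_one, one_mul]
  simpa only [inv_div] using ENNReal.le_rpow_inv_mul_of_le_mul_rpow hI (div_pos hβ hα) hIθ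

section Truncation

variable {n : ℕ}

def ballTrunc (F : Esp n → ℝ) (k : ℕ) : Esp n → ℝ :=
  (closedBall 0 (k + 1)).indicator fun x => min (F x) (k + 1)

lemma measurable_ballTrunc {F : Esp n → ℝ} (hF : Measurable F) (k : ℕ) :
    Measurable (ballTrunc F k) :=
  (hF.min measurable_const).indicator measurableSet_closedBall

lemma ballTrunc_eventually_eq (F : Esp n → ℝ) (x : Esp n) :
    ∀ᶠ k : ℕ in Filter.atTop, ballTrunc F k x = F x := by
  obtain ⟨N, hN⟩ := exists_nat_ge (max (F x) ‖x‖)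
  filter_upwards [Filter.eventually_ge_atTop N] with k hk
  have hkN : max (F x) ‖x‖ ≤ k + 1 := hN.trans (by exact_mod_cast hk.trans (Nat.le_succ k))
  rw [ballTrunc, Set.indicator_of_mem (mem_closedBall_zero_iff.2 (le_of_max_le_right hkN)),
    min_eq_left (le_of_max_le_left hkN)]

lemma ballTrunc_nonneg {F : Esp n → ℝ} (hF0 : ∀ x, 0 ≤ F x) (k : ℕ) (x : Esp n) :
    0 ≤ ballTrunc F k x :=
  Set.indicator_nonneg (fun y _ => le_min (hF0 y) (Nat.cast_add_one_pos k).le) x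

lemma ballTrunc_le {F : Esp n → ℝ} (hF0 : ∀ x, 0 ≤ F x) (k : ℕ) (x : Esp n) :
    ballTrunc F k x ≤ F x :=
  Set.indicator_apply_le' (fun _ => min_le_left _ _) (fun _ => hF0 x)

lemma ballTrunc_le_add_one (F : Esp n → ℝ) (k : ℕ) (x : Esp n) : ballTrunc F k x ≤ k + 1 :=
  Set.indicator_apply_le' (fun _ => min_le_right _ _) (fun _ => (Nat.cast_add_one_pos k).le)

lemma lintegral_ballTrunc_rpow_mul_ne_top {α : ℝ} (hα : 0 < α) {F H : Esp n → ℝ}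
    (hF0 : ∀ x, 0 ≤ F x) (hH1 : ∀ x, H x ≤ 1) (k : ℕ) :
    ∫⁻ x, ENNReal.ofReal (ballTrunc F k x ^ α * H x) ≠ ∞ := by
  set B : Set (Esp n) := closedBall 0 (k + 1)
  have hle : ∀ x, ENNReal.ofReal (ballTrunc F k x ^ α * H x) ≤
      B.indicator (fun _ => ENNReal.ofReal (((k : ℝ) + 1) ^ α)) x := fun x => by
    by_cases hx : x ∈ B
    · rw [Set.indicator_of_mem hx]
      have hfk := ballTrunc_nonneg hF0 k x
      exact ENNReal.ofReal_le_ofReal ((mul_le_of_le_one_right (rpow_nonneg hfk α) (hH1 x)).trans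
        (rpow_le_rpow hfk (ballTrunc_le_add_one F k x) hα.le))
    · simp [ballTrunc, B, hx, zero_rpow hα.ne']
  refine ne_top_of_le_ne_top ?_ (lintegral_mono hle)
  rw [lintegral_indicator_const measurableSet_closedBall]
  exact ENNReal.mul_ne_top ENNReal.ofReal_ne_top measure_closedBall_lt_top.ne

lemma lintegral_le_of_forall_ballTrunc {α : ℝ} {F H : Esp n → ℝ} (hF : Measurable F)
    (hH : Measurable H) {c : ℝ≥0∞}
    (h : ∀ k : ℕ, ∫⁻ x, ENNReal.ofReal (ballTrunc F k x ^ α * H x) ≤ c) :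
    ∫⁻ x, ENNReal.ofReal (F x ^ α * H x) ≤ c := by
  have hlim : ∀ x, Filter.liminf (fun k : ℕ => ENNReal.ofReal (ballTrunc F k x ^ α * H x))
      Filter.atTop = ENNReal.ofReal (F x ^ α * H x) := fun x =>
    (tendsto_const_nhds.congr' ((ballTrunc_eventually_eq F x).mono fun k hk => by
      rw [hk])).liminf_eq
  have hm : ∀ k, Measurable fun x => ENNReal.ofReal (ballTrunc F k x ^ α * H x) := fun k =>
    ((measurable_ballTrunc hF k).pow_const α |>.mul hH).ennreal_ofReal
  calc ∫⁻ x, ENNReal.ofReal (F x ^ α * H x)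
      = ∫⁻ x, Filter.liminf (fun k : ℕ => ENNReal.ofReal (ballTrunc F k x ^ α * H x))
          Filter.atTop := by simp only [hlim]
    _ ≤ Filter.liminf (fun k : ℕ => ∫⁻ x, ENNReal.ofReal (ballTrunc F k x ^ α * H x))
          Filter.atTop := lintegral_liminf_le hm
    _ ≤ c := Filter.liminf_le_of_frequently_le' (Filter.Frequently.of_forall h)

end Truncation

lemma lintegral_rpow_mul_le {n : ℕ} {α β : ℝ} (hβ : 0 < β) (hβα : β < α)
    {F H : Esp n → ℝ} {S : ℝ≥0∞}
    (hS : ∀ G, IsWeight β G → ∫⁻ x, ENNReal.ofReal (F x ^ β * G x) ≤ S * ENNReal.ofReal (wA β G))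
    (hH : IsWeight α H) (hFm : Measurable F) (hF0 : ∀ x, 0 ≤ F x) :
    ∫⁻ x, ENNReal.ofReal (F x ^ α * H x) ≤ S ^ (α / β) * ENNReal.ofReal (wA α H) :=
  lintegral_le_of_forall_ballTrunc hFm hH.1 fun k =>
    lintegral_rpow_mul_le_of_bounded hβ hβα hS hH (measurable_ballTrunc hFm k)
      (ballTrunc_nonneg hF0 k) (ballTrunc_le hF0 k) (Nat.cast_add_one_pos k)
      (ballTrunc_le_add_one F k)
      (lintegral_ballTrunc_rpow_mul_ne_top (hβ.trans hβα) hF0 (fun x => (hH.2.1 x).2) k)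

def fracMPow (n : ℕ) (α : ℝ) (F : Esp n → ℝ) : ℝ≥0∞ :=
  ⨆ (H : Esp n → ℝ) (_ : IsWeight α H ∧ H ≠ 0),
    (∫⁻ x, ENNReal.ofReal (F x ^ α * H x)) / ENNReal.ofReal (wA α H)

lemma lintegral_rpow_mul_le_fracMPow_mul {n : ℕ} {β : ℝ} {F G : Esp n → ℝ}
    (hS : fracMPow n β F ≠ ∞) (hG : IsWeight β G) :
    ∫⁻ x, ENNReal.ofReal (F x ^ β * G x) ≤ fracMPow n β F * ENNReal.ofReal (wA β G) := by
  rcases eq_or_ne G 0 with rfl | hG0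
  · simp
  rw [← ENNReal.div_le_iff_le_mul (Or.inr hS) (Or.inl ENNReal.ofReal_ne_top)]
  exact le_iSup₂_of_le G ⟨hG, hG0⟩ le_rfl

lemma fracMPow_le_of_forall_weight {n : ℕ} {α : ℝ} {F : Esp n → ℝ} {c : ℝ≥0∞}
    (h : ∀ H, IsWeight α H →
      ∫⁻ x, ENNReal.ofReal (F x ^ α * H x) ≤ c * ENNReal.ofReal (wA α H)) :
    fracMPow n α F ≤ c :=
  iSup₂_le fun H hH => ENNReal.div_le_of_le_mul (h H hH.1)

theorem stmt0_general (n : ℕ) (α β : ℝ) (hβ : 0 < β) (hβα : β < α)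
    (F : Esp n → ℝ) (hFm : Measurable F) (hF0 : ∀ x, 0 ≤ F x) :
    fracM n α F ≤ fracM n β F := by
  have hα : 0 < α := hβ.trans hβα
  change fracMPow n α F ^ (1 / α) ≤ fracMPow n β F ^ (1 / β)
  rcases eq_or_ne (fracMPow n β F) ∞ with hS | hS
  · rw [hS, ENNReal.top_rpow_of_pos (one_div_pos.2 hβ)]
    exact le_top
  have hαβ : fracMPow n α F ≤ fracMPow n β F ^ (α / β) :=
    fracMPow_le_of_forall_weight fun H hH =>
      lintegral_rpow_mul_le hβ hβα (fun G hG => lintegral_rpow_mul_le_fracMPow_mul hS hG) hH hFm hF0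
  calc fracMPow n α F ^ (1 / α) ≤ (fracMPow n β F ^ (α / β)) ^ (1 / α) :=
        ENNReal.rpow_le_rpow hαβ (one_div_pos.2 hα).le
    _ = fracMPow n β F ^ (1 / β) := by
        rw [← ENNReal.rpow_mul]
        field_simp

/-- Theorem 1.2 (weighted Hölder-type inequality): if `0 < β < α ≤ n` then
`M_α F ≤ M_β F` for every nonnegative Lebesgue measurable `F` on `ℝⁿ`. -/
theorem stmt0 (n : ℕ) (hn : 1 ≤ n) (α β : ℝ) (hβ : 0 < β) (hβα : β < α) (hα : α ≤ n)
    (F : Esp n → ℝ) (hFm : Measurable F) (hF0 : ∀ x, 0 ≤ F x) :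
    fracM n α F ≤ fracM n β F :=
  stmt0_general n α β hβ hβα F hFm hF0
end
end

section
/- Let n ≥ 2 be an integer and 0 < α < n. Then for every pair (β,b) of real numbers with β > α/2 and b > 0 there exist a number R ≥ 1 and a finite positive Borel measure μ on ℝⁿ supported in the closed unit ball B(0,1) with 0 < I_α(μ) < ∞ such that R^β ‖μ̂(R·)‖_{L¹(σ)} > b · √(I_α(μ)). -/
open MeasureTheory Metric Real
open scoped ENNReal

noncomputable section

/-- The Fourier transform of a measure on `ℝⁿ`. -/
def measFT {n : ℕ} (μ : Measure (Esp n)) (ξ : Esp n) : ℂ :=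
  ∫ y, Complex.exp (((-2 * π * (inner ℝ ξ y : ℝ) : ℝ) : ℂ) * Complex.I) ∂μ

/-- `𝒞_α(μ) = sup_{x, r>0} μ(B(x,r))/r^α`, valued in `ℝ≥0∞`. -/
def Cdim {n : ℕ} (α : ℝ) (μ : Measure (Esp n)) : ℝ≥0∞ :=
  ⨆ (x : Esp n) (r : ℝ) (_ : 0 < r), μ (closedBall x r) / ENNReal.ofReal (r ^ α)

/-- The `α`-dimensional energy `I_α(μ)`, valued in `ℝ≥0∞`. -/
def energy {n : ℕ} (α : ℝ) (μ : Measure (Esp n)) : ℝ≥0∞ :=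
  ∫⁻ x, ∫⁻ y, (ENNReal.ofReal ‖x - y‖) ^ (-α) ∂μ ∂μ


/-!
Rescale a fixed measure `μ₀` supported in `B(0, 1/16)` by `x ↦ x / R`. This multiplies the energy
`I_α` by `R^α`, while `ξ ↦ μ̂(Rξ)` on the sphere is `μ̂₀` itself, whose modulus there is at least
`μ₀(ℝⁿ)/2` because all phases `2π ξ·y` are at most `π/8`. So the left-hand side grows like
`R^(α/2)` and the right-hand side like `R^β` with `β > α/2`; the only other input is that the
sphere has positive `(n-1)`-dimensional Hausdorff measure, as it projects onto a unit ball of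
dimension `n - 1`.
-/

section Sphere

variable {E : Type*} [NormedAddCommGroup E] [InnerProductSpace ℝ E]

theorem closedBall_subset_orthogonalProjectionOnto_image_sphere [CompleteSpace E] {v : E}
    (hv : ‖v‖ = 1) :
    closedBall (0 : (ℝ ∙ v)ᗮ) 1 ⊆ (ℝ ∙ v)ᗮ.orthogonalProjectionOnto '' sphere 0 1 := by
  intro w hw
  have hw1 : ‖w‖ ^ 2 ≤ 1 := by
    rw [mem_closedBall_zero_iff] at hw
    nlinarith [norm_nonneg w]
  have hwv : inner ℝ (w : E) v = 0 :=
    Submodule.inner_left_of_mem_orthogonal (Submodule.mem_span_singleton_self v) w.2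
  refine ⟨w + √(1 - ‖w‖ ^ 2) • v, ?_, ?_⟩
  · rw [mem_sphere_zero_iff_norm, ← pow_eq_one_iff_of_nonneg (norm_nonneg _) two_ne_zero,
      norm_add_sq_real, inner_smul_right, hwv, norm_smul, hv, Real.norm_eq_abs,
      abs_of_nonneg (Real.sqrt_nonneg _), mul_one, Real.sq_sqrt (by linarith)]
    norm_num
  · rw [map_add, Submodule.orthogonalProjectionOnto_mem_subspace_eq_self, map_smul,
      Submodule.orthogonalProjectionOnto_orthogonalComplement_singleton_eq_zero, smul_zero,
      add_zero]

theorem hausdorffMeasure_sphere_pos [FiniteDimensional ℝ E] [Nontrivial E] [MeasurableSpace E]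
    [BorelSpace E] : 0 < μH[(Module.finrank ℝ E - 1 : ℕ)] (sphere (0 : E) 1) := by
  obtain ⟨v, hv⟩ := exists_norm_eq E zero_le_one
  have hK : Module.finrank ℝ (ℝ ∙ v)ᗮ = Module.finrank ℝ E - 1 := by
    have := Submodule.finrank_add_finrank_orthogonal (ℝ ∙ v)
    rw [finrank_span_singleton (by rintro rfl; simp at hv)] at this
    omega
  set K := (ℝ ∙ v)ᗮ
  calc (0 : ℝ≥0∞) < μH[(Module.finrank ℝ K : ℕ)] (closedBall (0 : K) 1) :=
        measure_closedBall_pos _ _ one_pos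
    _ ≤ μH[(Module.finrank ℝ K : ℕ)] (K.orthogonalProjectionOnto '' sphere 0 1) :=
        measure_mono (closedBall_subset_orthogonalProjectionOnto_image_sphere hv)
    _ ≤ _ := by
        rw [hK]
        exact hausdorffMeasure_orthogonalProjectionOnto_le K _ _ (Nat.cast_nonneg _)

end Sphere

theorem integrableOn_ball_norm_rpow_neg {E : Type*} [NormedAddCommGroup E] [NormedSpace ℝ E]
    [FiniteDimensional ℝ E] [Nontrivial E] [MeasurableSpace E] [BorelSpace E]
    (μ : Measure E) [μ.IsAddHaarMeasure] {α : ℝ} (hα : α < Module.finrank ℝ E) (r : ℝ) :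
    IntegrableOn (fun z : E => ‖z‖ ^ (-α)) (ball 0 r) μ := by
  rw [integrableOn_fun_norm_addHaar μ (f := fun t => t ^ (-α))]
  rcases le_or_gt r 0 with hr | hr
  · simp [Set.Ioo_eq_empty_of_le hr]
  have hd : ((Module.finrank ℝ E - 1 : ℕ) : ℝ) = Module.finrank ℝ E - 1 := by
    rw [Nat.cast_sub Module.finrank_pos, Nat.cast_one]
  refine (IntegrableOn.congr_fun ((intervalIntegral.integrableOn_Ioo_rpow_iff hr).2
    (show -1 < ((Module.finrank ℝ E - 1 : ℕ) : ℝ) + -α by rw [hd]; linarith))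
    (fun t ht => ?_) measurableSet_Ioo)
  rw [Real.rpow_add ht.1, Real.rpow_natCast, smul_eq_mul]

theorem setLIntegral_ball_norm_rpow_neg_lt_top {E : Type*} [NormedAddCommGroup E]
    [NormedSpace ℝ E] [FiniteDimensional ℝ E] [Nontrivial E] [MeasurableSpace E] [BorelSpace E]
    (μ : Measure E) [μ.IsAddHaarMeasure] {α : ℝ} (hα : α < Module.finrank ℝ E) (r : ℝ) :
    ∫⁻ z in ball 0 r, ENNReal.ofReal ‖z‖ ^ (-α) ∂μ < ⊤ := by
  refine lt_of_eq_of_lt (setLIntegral_congr_fun_ae measurableSet_ball ?_)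
    (integrableOn_ball_norm_rpow_neg μ hα r).setLIntegral_lt_top
  filter_upwards [compl_mem_ae_iff.2 (measure_singleton (μ := μ) 0)] with z hz _
  exact ENNReal.ofReal_rpow_of_pos (norm_pos_iff.2 hz)

theorem sphσ_univ_pos {n : ℕ} (hn : 0 < n) : 0 < sphσ n Set.univ := by
  have : Nonempty (Fin n) := ⟨⟨0, hn⟩⟩
  have h := hausdorffMeasure_sphere_pos (E := Esp n)
  rw [finrank_euclideanSpace_fin, Nat.cast_sub hn, Nat.cast_one] at h
  rwa [sphσ, Measure.restrict_apply_univ]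

theorem measurable_lintegral_ofReal_norm_sub_rpow {n : ℕ} (α : ℝ) (μ : Measure (Esp n))
    [SFinite μ] : Measurable fun x => ∫⁻ y, ENNReal.ofReal ‖x - y‖ ^ (-α) ∂μ :=
  Measurable.lintegral_prod_right'
    (f := fun p : Esp n × Esp n => ENNReal.ofReal ‖p.1 - p.2‖ ^ (-α)) (by fun_prop)

theorem energy_pos {n : ℕ} {α : ℝ} (hα : 0 ≤ α) {μ : Measure (Esp n)} [SFinite μ] (hμ : μ ≠ 0) :
    0 < energy α μ := by
  have hpos : ∀ x y : Esp n, 0 < ENNReal.ofReal ‖x - y‖ ^ (-α) := fun x y => by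
    rw [ENNReal.rpow_neg, ENNReal.inv_pos]
    exact ENNReal.rpow_ne_top_of_nonneg hα ENNReal.ofReal_ne_top
  have hμ_univ : 0 < μ Set.univ := Measure.measure_univ_pos.2 hμ
  have hinner : ∀ x, 0 < ∫⁻ y, ENNReal.ofReal ‖x - y‖ ^ (-α) ∂μ := fun x => by
    rw [lintegral_pos_iff_support (by fun_prop), Function.support_eq_univ fun y => (hpos x y).ne']
    exact hμ_univ
  rw [energy, lintegral_pos_iff_support (measurable_lintegral_ofReal_norm_sub_rpow α μ),
    Function.support_eq_univ fun x => (hinner x).ne']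
  exact hμ_univ

theorem energy_map_smul {n : ℕ} (α : ℝ) {c : ℝ} (hc : 0 < c) (μ : Measure (Esp n)) [SFinite μ] :
    energy α (μ.map (c • ·)) = ENNReal.ofReal c ^ (-α) * energy α μ := by
  have hsmul : Measurable fun x : Esp n => c • x := measurable_const_smul c
  have hscale : ∀ x y : Esp n, ENNReal.ofReal ‖c • x - c • y‖ ^ (-α) =
      ENNReal.ofReal c ^ (-α) * ENNReal.ofReal ‖x - y‖ ^ (-α) := fun x y => by
    rw [← smul_sub, norm_smul, Real.norm_eq_abs, abs_of_pos hc, ENNReal.ofReal_mul hc.le,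
      ENNReal.mul_rpow_of_ne_top ENNReal.ofReal_ne_top ENNReal.ofReal_ne_top]
  rw [energy, energy, lintegral_map (measurable_lintegral_ofReal_norm_sub_rpow α _) hsmul,
    ← lintegral_const_mul' _ _ (by simp [hc])]
  refine lintegral_congr fun x => ?_
  rw [lintegral_map (by fun_prop) hsmul, ← lintegral_const_mul' _ _ (by simp [hc])]
  simp only [hscale]

theorem energy_restrict_ball_lt_top {n : ℕ} (hn : 0 < n) {α : ℝ} (hα : α < n) (r : ℝ) :
    energy α (volume.restrict (ball (0 : Esp n) r)) < ⊤ := by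
  have : Nonempty (Fin n) := ⟨⟨0, hn⟩⟩
  set g : Esp n → ℝ≥0∞ := fun z => ENNReal.ofReal ‖z‖ ^ (-α)
  set K := ∫⁻ z in ball 0 (2 * r), g z
  have hK : K < ⊤ :=
    setLIntegral_ball_norm_rpow_neg_lt_top volume (by simpa using hα) (2 * r)
  have hinner : ∀ x ∈ ball (0 : Esp n) r, ∫⁻ y in ball 0 r, g (x - y) ≤ K := fun x hx => by
    calc ∫⁻ y in ball 0 r, g (x - y)
        = ∫⁻ y in ball 0 r, (ball 0 (2 * r)).indicator g (x - y) := by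
          refine setLIntegral_congr_fun measurableSet_ball fun y hy => ?_
          refine (Set.indicator_of_mem ?_ g).symm
          rw [mem_ball_zero_iff] at hx hy ⊢
          calc ‖x - y‖ ≤ ‖x‖ + ‖y‖ := norm_sub_le x y
            _ < 2 * r := by linarith
      _ ≤ ∫⁻ y, (ball 0 (2 * r)).indicator g (x - y) := setLIntegral_le_lintegral _ _
      _ = K := by rw [lintegral_sub_left_eq_self, lintegral_indicator measurableSet_ball]
  calc energy α (volume.restrict (ball (0 : Esp n) r))
      ≤ ∫⁻ _ in ball (0 : Esp n) r, K := setLIntegral_mono measurable_const hinner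
    _ < ⊤ := by
      rw [setLIntegral_const]
      exact ENNReal.mul_lt_top hK measure_ball_lt_top

theorem measFT_map_smul {n : ℕ} (μ : Measure (Esp n)) (c : ℝ) (ξ : Esp n) :
    measFT (μ.map (c • ·)) ξ = measFT μ (c • ξ) := by
  rw [measFT, measFT, integral_map (measurable_const_smul c).aemeasurable (by fun_prop)]
  simp only [real_inner_smul_left, real_inner_smul_right]

theorem half_measureReal_le_norm_measFT {n : ℕ} {μ : Measure (Esp n)} [IsFiniteMeasure μ]
    {r : ℝ} (hμ : ∀ᵐ y ∂μ, ‖y‖ ≤ r) {ξ : Esp n} (hξ : ‖ξ‖ * r ≤ 16⁻¹) :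
    μ.real Set.univ / 2 ≤ ‖measFT μ ξ‖ := by
  set e : Esp n → ℂ := fun y => Complex.exp (((-2 * π * inner ℝ ξ y : ℝ) : ℂ) * Complex.I)
  have he_int : Integrable e μ :=
    (integrable_const (1 : ℝ)).mono' (by fun_prop)
      (ae_of_all _ fun y => (Complex.norm_exp_ofReal_mul_I _).le)
  have he_close : ∀ᵐ y ∂μ, ‖e y - 1‖ ≤ 2⁻¹ := by
    filter_upwards [hμ] with y hy
    have hinner : |inner ℝ ξ y| ≤ 16⁻¹ :=
      (abs_real_inner_le_norm ξ y).trans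
        ((mul_le_mul_of_nonneg_left hy (norm_nonneg ξ)).trans hξ)
    calc ‖e y - 1‖ ≤ ‖-2 * π * inner ℝ ξ y‖ := by
          simpa only [e, mul_comm _ Complex.I] using norm_exp_I_mul_ofReal_sub_one_le
      _ = 2 * π * |inner ℝ ξ y| := by
          rw [Real.norm_eq_abs, abs_mul, abs_mul, abs_of_pos pi_pos]; norm_num
      _ ≤ 2 * 4 * 16⁻¹ := by gcongr; exact pi_le_four
      _ = 2⁻¹ := by norm_num
  have hdiff : ‖measFT μ ξ - μ.real Set.univ‖ ≤ 2⁻¹ * μ.real Set.univ := by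
    have : measFT μ ξ - μ.real Set.univ = ∫ y, (e y - 1) ∂μ := by
      rw [integral_sub he_int (integrable_const 1), integral_const, Complex.real_smul,
        mul_one, measFT]
    rw [this]
    exact norm_integral_le_of_norm_le_const he_close
  have := norm_sub_norm_le (μ.real Set.univ : ℂ) (μ.real Set.univ - measFT μ ξ)
  rw [sub_sub_cancel, norm_sub_rev, Complex.norm_real,
    Real.norm_of_nonneg measureReal_nonneg] at this
  linarith

theorem eLpNorm_measFT_pos {n : ℕ} (hn : 0 < n) {μ : Measure (Esp n)} [IsFiniteMeasure μ]
    (hμ0 : μ ≠ 0) (hμ : ∀ᵐ y ∂μ, ‖y‖ ≤ 16⁻¹) : 0 < eLpNorm (measFT μ) 1 (sphσ n) := by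
  have hbound : ∀ᵐ ξ ∂sphσ n, ENNReal.ofReal (μ.real Set.univ / 2) ≤ ‖measFT μ ξ‖ₑ := by
    filter_upwards [ae_restrict_mem isClosed_sphere.measurableSet] with ξ hξ
    rw [← ofReal_norm]
    refine ENNReal.ofReal_le_ofReal (half_measureReal_le_norm_measFT hμ ?_)
    rw [mem_sphere_zero_iff_norm.1 hξ, one_mul]
  have hm : 0 < μ.real Set.univ / 2 := by
    have := Measure.measure_univ_pos.2 hμ0
    rw [measureReal_def]
    exact half_pos (ENNReal.toReal_pos this.ne' (measure_ne_top μ _))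
  calc (0 : ℝ≥0∞) < ENNReal.ofReal (μ.real Set.univ / 2) * sphσ n Set.univ :=
        ENNReal.mul_pos (ENNReal.ofReal_pos.2 hm).ne' (sphσ_univ_pos hn).ne'
    _ = ∫⁻ _, ENNReal.ofReal (μ.real Set.univ / 2) ∂sphσ n := (lintegral_const _).symm
    _ ≤ eLpNorm (measFT μ) 1 (sphσ n) := by
        rw [eLpNorm_one_eq_lintegral_enorm]
        exact lintegral_mono_ae hbound

theorem eventually_lt_mul_ofReal_rpow_atTop {A c : ℝ≥0∞} (hA : A ≠ ⊤) (hc : c ≠ 0) {γ : ℝ}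
    (hγ : 0 < γ) : ∀ᶠ R in Filter.atTop, A < c * ENNReal.ofReal R ^ γ := by
  have hpow : Filter.Tendsto (fun R => ENNReal.ofReal R ^ γ) Filter.atTop (nhds ⊤) := by
    have := ((ENNReal.continuous_rpow_const (y := γ)).tendsto ⊤).comp ENNReal.tendsto_ofReal_atTop
    rwa [ENNReal.top_rpow_of_pos hγ] at this
  have hmul := ENNReal.Tendsto.const_mul hpow (Or.inl ENNReal.top_ne_zero) (a := c)
  rw [ENNReal.mul_top hc] at hmul
  exact hmul.eventually (lt_mem_nhds hA.lt_top)

theorem ae_norm_map_smul_le {E : Type*} [NormedAddCommGroup E] [NormedSpace ℝ E]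
    [MeasurableSpace E] [BorelSpace E] {μ : Measure E} {r : ℝ} (hμ : ∀ᵐ y ∂μ, ‖y‖ ≤ r) (c : ℝ) :
    ∀ᵐ y ∂μ.map (c • ·), ‖y‖ ≤ ‖c‖ * r :=
  (ae_map_iff (measurable_const_smul c).aemeasurable
    (measurableSet_le measurable_norm measurable_const)).2
    (hμ.mono fun y hy => by rw [norm_smul]; gcongr)

theorem mul_rpow_half_lt_ofReal_rpow_mul {a E L : ℝ≥0∞} {R α β : ℝ} (hR : 0 < R)
    (h : a * E ^ (1 / 2 : ℝ) < L * ENNReal.ofReal R ^ (β - α / 2)) :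
    a * (ENNReal.ofReal R ^ α * E) ^ (1 / 2 : ℝ) < ENNReal.ofReal (R ^ β) * L := by
  have hR0 : ENNReal.ofReal R ≠ 0 := ENNReal.ofReal_ne_zero_iff.2 hR
  calc a * (ENNReal.ofReal R ^ α * E) ^ (1 / 2 : ℝ)
      = ENNReal.ofReal R ^ (α / 2) * (a * E ^ (1 / 2 : ℝ)) := by
        rw [ENNReal.mul_rpow_of_nonneg _ _ (by norm_num), ← ENNReal.rpow_mul]
        ring_nf
    _ < ENNReal.ofReal R ^ (α / 2) * (L * ENNReal.ofReal R ^ (β - α / 2)) :=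
        ENNReal.mul_lt_mul_right
          (ENNReal.rpow_pos (pos_iff_ne_zero.2 hR0) ENNReal.ofReal_ne_top).ne' (by finiteness) h
    _ = ENNReal.ofReal (R ^ β) * L := by
        rw [← ENNReal.ofReal_rpow_of_pos hR, mul_left_comm,
          ← ENNReal.rpow_add _ _ hR0 ENNReal.ofReal_ne_top, add_sub_cancel, mul_comm]

theorem stmt13_general (n : ℕ) (α : ℝ) (hα0 : 0 < α) (hαn : α < n) :
    ∀ β b : ℝ, α / 2 < β → 0 < b →
      ∃ R : ℝ, 1 ≤ R ∧ ∃ μ : Measure (Esp n), IsFiniteMeasure μ ∧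
        μ ((closedBall (0 : Esp n) 1)ᶜ) = 0 ∧ 0 < energy α μ ∧ energy α μ < ⊤ ∧
        ENNReal.ofReal b * (energy α μ) ^ (1 / 2 : ℝ)
          < ENNReal.ofReal (R ^ β) * eLpNorm (fun ξ => measFT μ (R • ξ)) 1 (sphσ n) := by
  intro β b hβ _
  have hn : 0 < n := by exact_mod_cast hα0.trans hαn
  set μ₀ : Measure (Esp n) := volume.restrict (ball 0 16⁻¹)
  have : IsFiniteMeasure μ₀ := isFiniteMeasure_restrict.2 measure_ball_lt_top.ne
  have hμ₀_ne : μ₀ ≠ 0 := by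
    simpa [μ₀] using (measure_ball_pos volume (0 : Esp n) (by norm_num)).ne'
  have hμ₀_supp : ∀ᵐ y ∂μ₀, ‖y‖ ≤ 16⁻¹ :=
    ae_restrict_of_forall_mem measurableSet_ball fun y hy => (mem_ball_zero_iff.1 hy).le
  have hE₀_lt : energy α μ₀ < ⊤ := energy_restrict_ball_lt_top hn hαn 16⁻¹
  obtain ⟨R, hR, hR1⟩ := ((eventually_lt_mul_ofReal_rpow_atTop
    (A := ENNReal.ofReal b * energy α μ₀ ^ (1 / 2 : ℝ)) (by finiteness)
    (eLpNorm_measFT_pos hn hμ₀_ne hμ₀_supp).ne' (sub_pos.2 hβ)).and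
    (Filter.eventually_ge_atTop 1)).exists
  have hR0 : 0 < R := one_pos.trans_le hR1
  have hμ_energy : energy α (μ₀.map (R⁻¹ • ·)) = ENNReal.ofReal R ^ α * energy α μ₀ := by
    rw [energy_map_smul _ (inv_pos.2 hR0), ENNReal.ofReal_inv_of_pos hR0, ENNReal.inv_rpow,
      ENNReal.rpow_neg, inv_inv]
  have hμ_FT : (fun ξ => measFT (μ₀.map (R⁻¹ • ·)) (R • ξ)) = measFT μ₀ := funext fun ξ => by
    rw [measFT_map_smul, inv_smul_smul₀ hR0.ne']
  refine ⟨R, hR1, μ₀.map (R⁻¹ • ·), inferInstance, ?_, ?_, ?_, ?_⟩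
  · refine ae_iff.1 ((ae_norm_map_smul_le hμ₀_supp R⁻¹).mono fun y hy =>
      mem_closedBall_zero_iff.2 (hy.trans ?_))
    rw [norm_inv, Real.norm_of_nonneg hR0.le]
    linarith [inv_le_one_of_one_le₀ hR1]
  · rw [hμ_energy]
    exact ENNReal.mul_pos (by simp [hR0.not_ge]) (energy_pos hα0.le hμ₀_ne).ne'
  · rw [hμ_energy]
    exact ENNReal.mul_lt_top (ENNReal.rpow_lt_top_of_nonneg hα0.le ENNReal.ofReal_ne_top) hE₀_lt
  · rw [hμ_energy, hμ_FT]
    exact mul_rpow_half_lt_ofReal_rpow_mul hR0 hR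

/-- Proposition 8.3 (Wolff). -/
theorem stmt13 (n : ℕ) (hn : 2 ≤ n) (α : ℝ) (hα0 : 0 < α) (hαn : α < n) :
    ∀ β b : ℝ, α / 2 < β → 0 < b →
      ∃ R : ℝ, 1 ≤ R ∧ ∃ μ : Measure (Esp n), IsFiniteMeasure μ ∧
        μ ((closedBall (0 : Esp n) 1)ᶜ) = 0 ∧ 0 < energy α μ ∧ energy α μ < ⊤ ∧
        ENNReal.ofReal b * (energy α μ) ^ (1 / 2 : ℝ)
          < ENNReal.ofReal (R ^ β) * eLpNorm (fun ξ => measFT μ (R • ξ)) 1 (sphσ n) :=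
  stmt13_general n α hα0 hαn
end
end
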